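/- Let A = (A(n,k))_{n ≥ k ≥ 0} be an infinite lower triangular matrix over a field with A(n,k) ≠ 0 for all n ≥ k ≥ 0. If A is an SDR-matrix of order m (m ≥ 3), then A is an SDR-matrix of order m+1; hence A is an SDR-matrix of order m' for all m' ≥ 3. -/

import Mathlib

/-- `A` is an SDR-matrix of order `m`: the generalized Star of David rule holds for
all `2 ≤ p ≤ m-1` and `0 ≤ r ≤ p-1`. -/
def IsSDR {F : Type*} [Field F] (m : ℕ) (A : ℕ → ℕ → F) : Prop :=
  ∀ n k p r : ℕ, 2 ≤ p → p ≤ m - 1 → r ≤ p - 1 →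
    (∏ i ∈ Finset.range (r+1), A (n+i) (k+r-i)) *
      (∏ i ∈ Finset.range (p-r), A (n+p-i) (k+r+i+1)) =
    (∏ i ∈ Finset.range (r+1), A (n+p-i) (k+p-r+i)) *
      (∏ i ∈ Finset.range (p-r), A (n+i) (k+p-r-i-1))

/-!
The case `p = 2`, `r = 0` is the hexagon rule. Since the entries on the lower triangle are
nonzero, it says that the diagonal ratios `A (n+1) (k+1) / A n k` separate as `α n * β k`, and
therefore `A n k = f (n - k) * g n * h k` on the lower triangle. For a matrix of this form both
sides of every Star of David identity run over the same rows, the same columns and the same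
differences `n - k`. An identity that leaves the lower triangle has a zero entry on each side.
-/

open Finset

section StarOfDavid

variable {M : Type*} [CommMonoid M]

/-- `IsSDR m A` unfolds to `StarOfDavid A n k p r` for all `n k`, `2 ≤ p ≤ m - 1`,
`r ≤ p - 1`. -/
def StarOfDavid (A : ℕ → ℕ → M) (n k p r : ℕ) : Prop :=
  (∏ i ∈ range (r+1), A (n+i) (k+r-i)) * (∏ i ∈ range (p-r), A (n+p-i) (k+r+i+1)) =
    (∏ i ∈ range (r+1), A (n+p-i) (k+p-r+i)) * (∏ i ∈ range (p-r), A (n+i) (k+p-r-i-1))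

variable {A B : ℕ → ℕ → M} {n k p r : ℕ}

theorem prod_range_eq_of_reflect {u v : ℕ → M} {b : ℕ} (h : ∀ i < b, u (b - 1 - i) = v i) :
    ∏ i ∈ range b, u i = ∏ i ∈ range b, v i := by
  rw [← prod_range_reflect]
  exact prod_congr rfl fun i hi => h i (mem_range.1 hi)

theorem StarOfDavid.mul (hA : StarOfDavid A n k p r) (hB : StarOfDavid B n k p r) :
    StarOfDavid (fun i j => A i j * B i j) n k p r := by
  unfold StarOfDavid at *
  simp only [prod_mul_distrib]
  rw [mul_mul_mul_comm, hA, hB, mul_mul_mul_comm]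

theorem starOfDavid_sub (f : ℕ → M) (hr : r < p) :
    StarOfDavid (fun i j => f (i - j)) n k p r := by
  unfold StarOfDavid
  congr 1 <;> refine prod_range_eq_of_reflect fun i hi => congrArg _ ?_ <;> omega

theorem starOfDavid_row (g : ℕ → M) (hr : r < p) :
    StarOfDavid (fun i _ => g i) n k p r := by
  have left_eq : (∏ i ∈ range (r+1), g (n+i)) * ∏ i ∈ range (p-r), g (n+p-i) =
      ∏ i ∈ range (p+1), g (n+i) := by
    rw [show p + 1 = (r+1) + (p-r) by omega, prod_range_add _ (r+1)]
    congr 1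
    refine prod_range_eq_of_reflect fun i hi => congrArg _ ?_; omega
  have right_eq : (∏ i ∈ range (r+1), g (n+p-i)) * ∏ i ∈ range (p-r), g (n+i) =
      ∏ i ∈ range (p+1), g (n+i) := by
    rw [show p + 1 = (p-r) + (r+1) by omega, prod_range_add _ (p-r), mul_comm]
    congr 1
    refine prod_range_eq_of_reflect fun i hi => congrArg _ ?_; omega
  exact left_eq.trans right_eq.symm

theorem starOfDavid_col (h : ℕ → M) (hr : r < p) :
    StarOfDavid (fun _ j => h j) n k p r := by
  have left_eq : (∏ i ∈ range (r+1), h (k+r-i)) * ∏ i ∈ range (p-r), h (k+r+i+1) =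
      ∏ i ∈ range (p+1), h (k+i) := by
    rw [show p + 1 = (r+1) + (p-r) by omega, prod_range_add _ (r+1)]
    congr 1
    · refine prod_range_eq_of_reflect fun i hi => congrArg _ ?_; omega
    · refine prod_congr rfl fun i _ => congrArg _ ?_; omega
  have right_eq : (∏ i ∈ range (r+1), h (k+p-r+i)) * ∏ i ∈ range (p-r), h (k+p-r-i-1) =
      ∏ i ∈ range (p+1), h (k+i) := by
    rw [show p + 1 = (p-r) + (r+1) by omega, prod_range_add _ (p-r), mul_comm]
    congr 1
    · refine prod_range_eq_of_reflect fun i hi => congrArg _ ?_; omega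
    · refine prod_congr rfl fun i _ => congrArg _ ?_; omega
  exact left_eq.trans right_eq.symm

theorem starOfDavid_congr (hAB : ∀ i j, j ≤ i → A i j = B i j) (h₁ : k + r ≤ n)
    (h₂ : k + p ≤ n + r + 1) (hr : r < p) :
    StarOfDavid A n k p r ↔ StarOfDavid B n k p r := by
  unfold StarOfDavid
  apply Iff.of_eq
  congr 2 <;> refine prod_congr rfl fun i hi => hAB _ _ ?_ <;> rw [mem_range] at hi <;> omega

end StarOfDavid

section Triangular

variable {M : Type*} [CommMonoidWithZero M] {A : ℕ → ℕ → M} {n k p r : ℕ}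

theorem starOfDavid_of_lt (hA : ∀ i j, i < j → A i j = 0) (hr : r < p)
    (h : n < k + r ∨ n + r + 1 < k + p) : StarOfDavid A n k p r := by
  unfold StarOfDavid
  rcases h with h | h
  · rw [prod_eq_zero (mem_range.2 (Nat.zero_lt_succ r)) (hA n (k + r - 0) (by omega)),
      prod_eq_zero (mem_range.2 (Nat.lt_succ_self r)) (hA (n + p - r) (k + p - r + r) (by omega)),
      zero_mul, zero_mul]
  · rw [prod_eq_zero (mem_range.2 (show p - r - 1 < p - r by omega))
        (hA (n + p - (p - r - 1)) (k + r + (p - r - 1) + 1) (by omega)),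
      prod_eq_zero (mem_range.2 (show 0 < p - r by omega))
        (hA (n + 0) (k + p - r - 0 - 1) (by omega)),
      mul_zero, mul_zero]

theorem starOfDavid_of_eq_mul_mul {f g h : ℕ → M} (hA : ∀ i j, i < j → A i j = 0)
    (hfac : ∀ i j, j ≤ i → A i j = f (i - j) * g i * h j) (hr : r < p) :
    StarOfDavid A n k p r := by
  by_cases hlt : n < k + r ∨ n + r + 1 < k + p
  · exact starOfDavid_of_lt hA hr hlt
  · rw [not_or, not_lt, not_lt] at hlt
    rw [starOfDavid_congr hfac hlt.1 (by omega) hr]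
    exact ((starOfDavid_sub f hr).mul (starOfDavid_row g hr)).mul (starOfDavid_col h hr)

end Triangular

section Factorization

variable {F : Type*} [Field F]

theorem eq_mul_prod_div_of_mul_eq_mul {u : ℕ → ℕ → F} (hu : ∀ n k, k ≤ n → u n k ≠ 0)
    (hsep : ∀ n k, k + 1 ≤ n → u n (k+1) * u (n+1) k = u n k * u (n+1) (k+1))
    {n k : ℕ} (hk : k ≤ n) :
    u n k = u n 0 * ∏ j ∈ range k, u (j+1) (j+1) / u (j+1) j := by
  -- the ratio `u n (k+1) / u n k` does not depend on `n ≥ k + 1`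
  have hratio : ∀ k n, k + 1 ≤ n → u n (k+1) * u (k+1) k = u (k+1) (k+1) * u n k := by
    intro k n hn
    induction n, hn using Nat.le_induction with
    | base => ring
    | succ n hn ih =>
      apply mul_left_cancel₀ (hu n k (by omega))
      linear_combination u (n+1) k * ih - u (k+1) k * hsep n k hn
  induction k with
  | zero => simp
  | succ k ih =>
    rw [prod_range_succ, ← mul_assoc, ← ih (by omega)]
    field_simp [hu (k+1) k (by omega)]
    linear_combination hratio k n hk

theorem div_mul_div_eq_of_hexagon {A : ℕ → ℕ → F} (hne : ∀ n k, k ≤ n → A n k ≠ 0)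
    (hex : ∀ n k, k + 1 ≤ n →
      A n k * (A (n+2) (k+1) * A (n+1) (k+2)) = A (n+2) (k+2) * (A n (k+1) * A (n+1) k))
    {n k : ℕ} (hk : k + 1 ≤ n) :
    A (n+1) (k+2) / A n (k+1) * (A (n+2) (k+1) / A (n+1) k) =
      A (n+1) (k+1) / A n k * (A (n+2) (k+2) / A (n+1) (k+1)) := by
  have := hne n k (by omega)
  have := hne n (k+1) hk
  have := hne (n+1) k (by omega)
  have := hne (n+1) (k+1) (by omega)
  field_simp
  linear_combination hex n k hk

theorem exists_eq_mul_mul_of_hexagon {A : ℕ → ℕ → F} (hne : ∀ n k, k ≤ n → A n k ≠ 0)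
    (hex : ∀ n k, k + 1 ≤ n →
      A n k * (A (n+2) (k+1) * A (n+1) (k+2)) = A (n+2) (k+2) * (A n (k+1) * A (n+1) k)) :
    ∃ f g h : ℕ → F, ∀ n k, k ≤ n → A n k = f (n - k) * g n * h k := by
  set q : ℕ → ℕ → F := fun n k => A (n+1) (k+1) / A n k
  have hq_ne : ∀ n k, k ≤ n → q n k ≠ 0 := fun n k hk =>
    div_ne_zero (hne _ _ (by omega)) (hne n k hk)
  have hsep : ∀ n k, k + 1 ≤ n → q n (k+1) * q (n+1) k = q n k * q (n+1) (k+1) :=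
    fun n k hk => div_mul_div_eq_of_hexagon hne hex hk
  set g : ℕ → F := fun n => ∏ t ∈ range n, q t 0
  set h : ℕ → F := fun k => ∏ t ∈ range k, ∏ j ∈ range t, q (j+1) (j+1) / q (j+1) j
  have hg : ∀ n, g n ≠ 0 := fun n => prod_ne_zero_iff.2 fun t _ => hq_ne t 0 (Nat.zero_le t)
  refine ⟨fun d => A d 0 / g d, g, h, fun n k hk => ?_⟩
  induction k generalizing n with
  | zero => simp [h, hg n]
  | succ k ih =>
    obtain ⟨n, rfl⟩ : ∃ n', n = n' + 1 := ⟨n - 1, by omega⟩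
    have hstep : A (n+1) (k+1) = A n k * q n k := (mul_div_cancel₀ _ (hne n k (by omega))).symm
    -- `q n k` is `q n 0` times a factor depending only on `k`:
    -- `g` collects the first, `h` the second
    rw [hstep, ih n (by omega), eq_mul_prod_div_of_mul_eq_mul hq_ne hsep (by omega : k ≤ n)]
    simp only [g, h, prod_range_succ, show n + 1 - (k + 1) = n - k by omega]
    ring

end Factorization

theorem IsSDR.hexagon {F : Type*} [Field F] {A : ℕ → ℕ → F} {m : ℕ} (hA : IsSDR m A)
    (hm : 3 ≤ m) (n k : ℕ) :
    A n k * (A (n+2) (k+1) * A (n+1) (k+2)) = A (n+2) (k+2) * (A n (k+1) * A (n+1) k) := by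
  simpa [prod_range_succ] using hA n k 2 0 le_rfl (by omega) (by omega)

theorem isSDR_succ_of_isSDR {F : Type*} [Field F]
    (A : ℕ → ℕ → F) (hAlt : ∀ n k, n < k → A n k = 0)
    (hne : ∀ n k, k ≤ n → A n k ≠ 0)
    (m : ℕ) (hm : 3 ≤ m) (hA : IsSDR m A) :
    IsSDR (m+1) A ∧ ∀ m', 3 ≤ m' → IsSDR m' A := by
  obtain ⟨f, g, h, hfac⟩ := exists_eq_mul_mul_of_hexagon hne fun n k _ => hA.hexagon hm n k
  have hall : ∀ m', IsSDR m' A := fun _ _ _ p r hp _ hr =>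
    starOfDavid_of_eq_mul_mul hAlt hfac (by omega)
  exact ⟨hall (m+1), fun m' _ => hall m'⟩
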